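/- arXiv:0801.0030 — 2 statements merged into one kernel-verified Lean document; each statement's English description precedes it below -/
import Mathlib

section
/- Let n = p*q with p, q distinct odd primes, and let r be a prime divisor of 2^n + 1 with r ≠ 3. Then p divides r - 1, or q divides r - 1, or n divides r - 1. -/
/-!
Let `d` be the order of `2` modulo `r`. Since `2 ^ (p * q) ≡ -1`, `d` divides `2 * p * q`, and by
Fermat `d` divides `r - 1`. If neither `p` nor `q` divided `d`, then `d ∣ 2`, so `r ∣ 2 ^ 2 - 1 = 3`,
which is excluded. Hence `p ∣ d ∣ r - 1` or `q ∣ d ∣ r - 1`.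
-/

lemma Nat.Prime.dvd_or_dvd_of_dvd_mul_mul {p q d m : ℕ} (hp : p.Prime) (hq : q.Prime)
    (hd : d ∣ m * (p * q)) (hdm : ¬ d ∣ m) : p ∣ d ∨ q ∣ d := by
  by_contra! h
  have hdp : d.Coprime p := ((hp.coprime_iff_not_dvd).mpr h.1).symm
  have hdq : d.Coprime q := ((hq.coprime_iff_not_dvd).mpr h.2).symm
  exact hdm ((hdp.mul_right hdq).dvd_of_dvd_mul_right hd)

lemma orderOf_dvd_two_mul_of_pow_eq_neg_one {M : Type*} [Monoid M] [HasDistribNeg M] {x : M}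
    {n : ℕ} (h : x ^ n = -1) : orderOf x ∣ 2 * n :=
  orderOf_dvd_of_pow_eq_one (by rw [mul_comm, pow_mul, h, neg_one_sq])

namespace ZMod

lemma natCast_pow_eq_neg_one_of_dvd {r a n : ℕ} (h : r ∣ a ^ n + 1) : (a : ZMod r) ^ n = -1 := by
  rw [← Nat.cast_pow, eq_neg_iff_add_eq_zero, ← Nat.cast_one, ← Nat.cast_add,
    natCast_eq_zero_iff]
  exact h

lemma eq_three_of_orderOf_two_dvd_two {r : ℕ} (hr : r.Prime) (h : orderOf (2 : ZMod r) ∣ 2) :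
    r = 3 := by
  have h3 : ((3 : ℕ) : ZMod r) = 0 := by
    have := orderOf_dvd_iff_pow_eq_one.mp h
    push_cast
    linear_combination this
  exact (Nat.prime_dvd_prime_iff_eq hr Nat.prime_three).mp ((natCast_eq_zero_iff 3 r).mp h3)

end ZMod

theorem stmt_2_general (p q : ℕ) (hp : p.Prime) (hq : q.Prime)
    (r : ℕ) (hr : r.Prime) (hdvd : r ∣ 2 ^ (p * q) + 1) (hr3 : r ≠ 3) :
    p ∣ r - 1 ∨ q ∣ r - 1 ∨ p * q ∣ r - 1 := by
  have : Fact r.Prime := ⟨hr⟩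
  have hneg : (2 : ZMod r) ^ (p * q) = -1 := by
    exact_mod_cast ZMod.natCast_pow_eq_neg_one_of_dvd hdvd
  have h2 : (2 : ZMod r) ≠ 0 :=
    ne_zero_pow (Nat.mul_ne_zero hp.ne_zero hq.ne_zero) (hneg ▸ neg_ne_zero.mpr one_ne_zero)
  have hd_sub_one : orderOf (2 : ZMod r) ∣ r - 1 := ZMod.orderOf_dvd_card_sub_one h2
  rcases hp.dvd_or_dvd_of_dvd_mul_mul hq (orderOf_dvd_two_mul_of_pow_eq_neg_one hneg)
      (mt (ZMod.eq_three_of_orderOf_two_dvd_two hr) hr3) with hpd | hqd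
  · exact Or.inl (hpd.trans hd_sub_one)
  · exact Or.inr (Or.inl (hqd.trans hd_sub_one))

theorem stmt_2 (p q : ℕ) (hp : p.Prime) (hq : q.Prime) (hpo : Odd p) (hqo : Odd q)
    (hpq : p ≠ q) (r : ℕ) (hr : r.Prime) (hdvd : r ∣ 2 ^ (p * q) + 1) (hr3 : r ≠ 3) :
    p ∣ r - 1 ∨ q ∣ r - 1 ∨ p * q ∣ r - 1 :=
  stmt_2_general p q hp hq r hr hdvd hr3
end

section
/- Let n = p*q with p, q distinct odd primes and suppose 2^(p-1) ≢ 1 (mod q) or 2^(q-1) ≢ 1 (mod p). If r is any prime divisor of 2^n + 1 with r ≢ 1 (mod n) and r ≠ 3, then gcd(r - 1, n) ∈ {p, q}; that is, the gcd is a nontrivial prime factor of n. -/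
/-!
Let `d` be the order of `2` modulo `r` and `n = p * q`. From `2 ^ n ≡ -1 (mod r)` we get `d ∣ 2n`, and Fermat gives
`d ∣ r - 1`. If `r - 1` were coprime to `n`, then so would be `d`, forcing `d ∣ 2`, i.e. `r ∣ 2 ^ 2 - 1 = 3`.
Hence `gcd (r - 1) (p * q)` is a divisor of `p * q` other than `1`, and it is not `p * q` because
`r ≢ 1 (mod p * q)`.
-/

theorem ZMod.gcd_sub_one_ne_one_of_pow_eq_neg_one {r n : ℕ} [Fact r.Prime] {x : ZMod r}
    (hn : n ≠ 0) (hx : x ^ n = -1) (hx2 : x ^ 2 ≠ 1) : (r - 1).gcd n ≠ 1 := by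
  intro hcop
  have hx0 : x ≠ 0 := by
    rintro rfl
    simp [zero_pow hn] at hx
  have hd2n : orderOf x ∣ 2 * n :=
    orderOf_dvd_of_pow_eq_one (by rw [pow_mul', hx, neg_one_sq])
  have hdcop : (orderOf x).Coprime n :=
    Nat.Coprime.coprime_dvd_left (ZMod.orderOf_dvd_card_sub_one hx0) hcop
  exact hx2 (orderOf_dvd_iff_pow_eq_one.mp (hdcop.dvd_of_dvd_mul_right hd2n))

theorem ZMod.two_sq_ne_one {r : ℕ} (hr : r.Prime) (hr3 : r ≠ 3) : (2 : ZMod r) ^ 2 ≠ 1 := by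
  intro h
  have h3 : ((3 : ℕ) : ZMod r) = 0 := by
    push_cast
    linear_combination h
  exact hr3 ((Nat.prime_dvd_prime_iff_eq hr Nat.prime_three).mp
    ((ZMod.natCast_eq_zero_iff _ _).mp h3))

theorem Nat.gcd_mul_prime_eq_left_or_right {p q m : ℕ} (hp : p.Prime) (hq : q.Prime)
    (hm : ¬ p * q ∣ m) (h1 : m.gcd (p * q) ≠ 1) : m.gcd (p * q) = p ∨ m.gcd (p * q) = q := by
  obtain ⟨a, b, ha, hb, hab⟩ := Nat.dvd_mul.mp (Nat.gcd_dvd_right m (p * q))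
  rcases hp.eq_one_or_self_of_dvd a ha with rfl | rfl <;>
    rcases hq.eq_one_or_self_of_dvd b hb with rfl | rfl
  · exact absurd hab.symm (by simpa using h1)
  · exact Or.inr (by simpa using hab.symm)
  · exact Or.inl (by simpa using hab.symm)
  · exact absurd (hab ▸ Nat.gcd_dvd_left _ _) hm

theorem stmt_19_general (p q : ℕ) (hp : p.Prime) (hq : q.Prime)
    (r : ℕ) (hr : r.Prime) (hdvd : r ∣ 2 ^ (p * q) + 1)
    (hr1 : (r : ZMod (p * q)) ≠ 1) (hr3 : r ≠ 3) :
    Nat.gcd (r - 1) (p * q) = p ∨ Nat.gcd (r - 1) (p * q) = q := by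
  have : Fact r.Prime := ⟨hr⟩
  have hneg : (2 : ZMod r) ^ (p * q) = -1 := by
    have hcast : ((2 ^ (p * q) + 1 : ℕ) : ZMod r) = 0 := (ZMod.natCast_eq_zero_iff _ _).mpr hdvd
    push_cast at hcast
    linear_combination hcast
  have hnpq : ¬ p * q ∣ r - 1 := fun hdvd' =>
    hr1 ((ZMod.natCast_eq_natCast_iff' r 1 (p * q)).mpr
      ((Nat.modEq_iff_dvd' hr.one_le).mpr hdvd').symm |>.trans Nat.cast_one)
  exact Nat.gcd_mul_prime_eq_left_or_right hp hq hnpq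
    (ZMod.gcd_sub_one_ne_one_of_pow_eq_neg_one (mul_ne_zero hp.ne_zero hq.ne_zero) hneg
      (ZMod.two_sq_ne_one hr hr3))

theorem stmt_19 (p q : ℕ) (hp : p.Prime) (hq : q.Prime) (hpo : Odd p) (hqo : Odd q)
    (hpq : p ≠ q) (h : (2 : ZMod q) ^ (p - 1) ≠ 1 ∨ (2 : ZMod p) ^ (q - 1) ≠ 1)
    (r : ℕ) (hr : r.Prime) (hdvd : r ∣ 2 ^ (p * q) + 1)
    (hr1 : (r : ZMod (p * q)) ≠ 1) (hr3 : r ≠ 3) :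
    Nat.gcd (r - 1) (p * q) = p ∨ Nat.gcd (r - 1) (p * q) = q :=
  stmt_19_general p q hp hq r hr hdvd hr1 hr3
end
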